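/- Let G be a prior supported on [0,h] and Y ~ f_G the Poisson mixture. Then for any integer K > 2h, P[Y ≥ K] ≤ 2 e^{-h} h^K / K!. -/

import Mathlib

open MeasureTheory Real

/-- Poisson density with mean `θ` at point `y`. -/
noncomputable def poissonPdf (θ : ℝ) (y : ℕ) : ℝ :=
  Real.exp (-θ) * θ ^ y / (Nat.factorial y)

/-- Poisson mixture density `f_G`. -/
noncomputable def mixturePdf (G : Measure ℝ) (y : ℕ) : ℝ :=
  ∫ θ, poissonPdf θ y ∂G

/-!
On `[0, h]` every Poisson density `poissonPdf θ y` with `y ≥ h` is dominated by `poissonPdf h y`,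
because `θ ↦ e^{-θ} θ^y` increases on `[0, y]`; hence so is the mixture density. For `y ≥ K > 2h`
the ratio `poissonPdf h (y + 1) / poissonPdf h y = h / (y + 1)` is at most `1/2`, so the tail of
`poissonPdf h` beyond `K` is bounded by the geometric series `poissonPdf h K · ∑ 2⁻ⁿ`.
-/

lemma exp_neg_mul_pow_le_of_le {θ h : ℝ} {y : ℕ} (hθ : 0 ≤ θ) (hθh : θ ≤ h) (hy : h ≤ y) :
    exp (-θ) * θ ^ y ≤ exp (-h) * h ^ y := by
  rcases hθh.eq_or_lt with rfl | hlt
  · rfl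
  have hh : 0 < h := hθ.trans_lt hlt
  have hratio : θ / h - 1 ≤ 0 := by rw [sub_nonpos, div_le_one hh]; exact hlt.le
  have key : (θ / h) ^ y ≤ exp (θ - h) :=
    calc (θ / h) ^ y ≤ exp (θ / h - 1) ^ y := by
          gcongr; linarith [add_one_le_exp (θ / h - 1)]
      _ = exp (y * (θ / h - 1)) := (exp_nat_mul _ _).symm
      _ ≤ exp (h * (θ / h - 1)) := exp_le_exp.2 (mul_le_mul_of_nonpos_right hy hratio)
      _ = exp (θ - h) := by congr 1; field_simp
  calc exp (-θ) * θ ^ y = exp (-θ) * (θ / h) ^ y * h ^ y := by rw [div_pow]; field_simp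
    _ ≤ exp (-θ) * exp (θ - h) * h ^ y := by gcongr
    _ = exp (-h) * h ^ y := by rw [← exp_add]; ring_nf

lemma poissonPdf_nonneg {θ : ℝ} (hθ : 0 ≤ θ) (y : ℕ) : 0 ≤ poissonPdf θ y := by
  unfold poissonPdf; positivity

lemma poissonPdf_le_poissonPdf {θ h : ℝ} {y : ℕ} (hθ : 0 ≤ θ) (hθh : θ ≤ h) (hy : h ≤ y) :
    poissonPdf θ y ≤ poissonPdf h y := by
  unfold poissonPdf
  exact div_le_div_of_nonneg_right (exp_neg_mul_pow_le_of_le hθ hθh hy) (Nat.cast_nonneg _)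

lemma poissonPdf_succ (θ : ℝ) (y : ℕ) :
    poissonPdf θ (y + 1) = θ / (y + 1) * poissonPdf θ y := by
  unfold poissonPdf
  rw [Nat.factorial_succ, pow_succ]
  push_cast
  field_simp

lemma poissonPdf_add_le_geometric {h : ℝ} {K : ℕ} (hh : 0 ≤ h) (hK : 2 * h ≤ K + 1) (n : ℕ) :
    poissonPdf h (n + K) ≤ (1 / 2) ^ n * poissonPdf h K := by
  have hstep (k : ℕ) : poissonPdf h (k + 1 + K) ≤ 1 / 2 * poissonPdf h (k + K) := by
    rw [add_right_comm, poissonPdf_succ]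
    have : h / ((k + K : ℕ) + 1 : ℝ) ≤ 1 / 2 := by
      rw [div_le_div_iff₀ (by positivity) two_pos]
      push_cast
      linarith [(k.cast_nonneg : (0 : ℝ) ≤ k)]
    gcongr
    exact poissonPdf_nonneg hh _
  simpa using le_geom (u := fun n ↦ poissonPdf h (n + K)) (by norm_num) n fun k _ ↦ hstep k

lemma mixturePdf_nonneg {G : Measure ℝ} (hG : ∀ᵐ θ ∂G, 0 ≤ θ) (y : ℕ) : 0 ≤ mixturePdf G y :=
  integral_nonneg_of_ae (hG.mono fun _ hθ ↦ poissonPdf_nonneg hθ y)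

lemma mixturePdf_le_poissonPdf {G : Measure ℝ} [IsProbabilityMeasure G] {h : ℝ}
    (hG : ∀ᵐ θ ∂G, θ ∈ Set.Icc 0 h) {y : ℕ} (hy : h ≤ y) :
    mixturePdf G y ≤ poissonPdf h y := by
  have hbound : ∀ᵐ θ ∂G, ‖poissonPdf θ y‖ ≤ poissonPdf h y := hG.mono fun θ hθ ↦ by
    rw [Real.norm_of_nonneg (poissonPdf_nonneg hθ.1 y)]
    exact poissonPdf_le_poissonPdf hθ.1 hθ.2 hy
  simpa [mixturePdf] using (le_abs_self _).trans (norm_integral_le_of_norm_le_const hbound)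

lemma tsum_subtype_le_eq_tsum_add {α : Type*} [AddCommMonoid α] [TopologicalSpace α]
    (f : ℕ → α) (K : ℕ) : ∑' y : {y : ℕ // K ≤ y}, f y = ∑' n, f (n + K) := by
  have hrange : Set.range (· + K) = Set.Ici K := by
    simpa using Set.range_add_eq_image_Ici (f := id) (k := K)
  rw [← tsum_range f (add_left_injective K)]
  exact (tsum_congr_set_coe f hrange).symm

lemma tsum_le_two_mul_of_le_geometric {f : ℕ → ℝ} {C : ℝ} (hf : ∀ n, 0 ≤ f n)
    (hle : ∀ n, f n ≤ (1 / 2) ^ n * C) : ∑' n, f n ≤ 2 * C := by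
  have hgeom : Summable fun n : ℕ ↦ (1 / 2 : ℝ) ^ n * C := summable_geometric_two.mul_right C
  calc ∑' n, f n ≤ ∑' n : ℕ, (1 / 2 : ℝ) ^ n * C :=
        (hgeom.of_nonneg_of_le hf hle).tsum_le_tsum hle hgeom
    _ = 2 * C := by rw [tsum_mul_right, tsum_geometric_two]

theorem tail_poisson_mixture_bounded_general (h : ℝ)
    (G : Measure ℝ) [IsProbabilityMeasure G] (hsupp : ∀ᵐ θ ∂G, θ ∈ Set.Icc 0 h)
    (K : ℕ) (hK : 2 * h < K) :
    ∑' y : {y : ℕ // K ≤ y}, mixturePdf G y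
      ≤ 2 * Real.exp (-h) * h ^ K / (Nat.factorial K) := by
  obtain ⟨θ, hθ⟩ := hsupp.exists
  have hh : 0 ≤ h := hθ.1.trans hθ.2
  have hbound (n : ℕ) : mixturePdf G (n + K) ≤ (1 / 2) ^ n * poissonPdf h K := by
    refine (mixturePdf_le_poissonPdf hsupp ?_).trans (poissonPdf_add_le_geometric hh (by linarith) n)
    push_cast
    linarith [(n.cast_nonneg : (0 : ℝ) ≤ n)]
  rw [tsum_subtype_le_eq_tsum_add]
  calc ∑' n, mixturePdf G (n + K) ≤ 2 * poissonPdf h K :=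
        tsum_le_two_mul_of_le_geometric (fun n ↦ mixturePdf_nonneg (hsupp.mono fun _ ↦ And.left) _)
          hbound
    _ = 2 * Real.exp (-h) * h ^ K / (Nat.factorial K) := by unfold poissonPdf; ring

/-- if the prior `G` is supported on `[0,h]` and `Y ~ f_G`, then for any
integer `K > 2h`, `P[Y ≥ K] ≤ 2 e^{-h} h^K / K!`. -/
theorem tail_poisson_mixture_bounded (h : ℝ) (hh : 0 < h)
    (G : Measure ℝ) [IsProbabilityMeasure G] (hsupp : ∀ᵐ θ ∂G, θ ∈ Set.Icc 0 h)
    (K : ℕ) (hK : 2 * h < K) :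
    ∑' y : {y : ℕ // K ≤ y}, mixturePdf G y
      ≤ 2 * Real.exp (-h) * h ^ K / (Nat.factorial K) :=
  tail_poisson_mixture_bounded_general h G hsupp K hK
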